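/- For θ₁, θ₂, θ₃ ∈ ℝ let p(θ₁,θ₂,θ₃) = ½(e^{iθ₁}, e^{iθ₂}, e^{iθ₃}, e^{i(π/2−θ₁−θ₂−θ₃)}) ∈ ℂ⁴ and let Y₁, Y₂, Y₃ be the partial derivatives of p with respect to θ₁, θ₂, θ₃ (so Yⱼ has entry (i/2)e^{iθⱼ} in slot j, entry −(i/2)e^{i(π/2−θ₁−θ₂−θ₃)} in slot 4, and 0 elsewhere). Then ω₀(a,b) = 0 for all a, b ∈ {p, Y₁, Y₂, Y₃}, and Im Ω₀(p, Y₁, Y₂, Y₃) = 0. Hence the cone over the torus A₁ = {p(θ₁,θ₂,θ₃)} is special Lagrangian in ℂ⁴, so A₁ is a minimal Legendrian, hence associative, 3-torus in S⁷. -/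

import Mathlib

/-!
Each of `p, Y₁, Y₂, Y₃` is a constant coefficient vector multiplied entrywise by the unit phase
vector `(e^{iθ₁}, e^{iθ₂}, e^{iθ₃}, e^{i(π/2−θ₁−θ₂−θ₃)})`. Multiplying by unit phases is unitary,
so it preserves `ω₀`, and it scales `Ω₀` by the product of the phases, `e^{iπ/2} = i`. The
coefficient vectors are `½(1,1,1,1)` and `(i/2)(eₖ − e₄)`: the first is real and the others
are `i` times real vectors orthogonal to `(1,1,1,1)`, so `ω₀` vanishes on them, and their `Ω₀`
is `i/4`. Hence `Ω₀(p, Y₁, Y₂, Y₃) = -1/4`.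
-/

noncomputable section

open Complex Real

/-- `ℂ⁴` as functions `Fin 4 → ℂ`. -/
abbrev C4 := Fin 4 → ℂ

/-- The Kähler form on `ℂ⁴`: `ω₀(u,v) = Σⱼ Im (conj uⱼ * vⱼ)`. -/
def omega0 (u v : C4) : ℝ := ∑ j, ((starRingEnd ℂ) (u j) * v j).im

/-- The holomorphic volume form on `ℂ⁴`: determinant of the complex 4×4 matrix with
columns `v₁, v₂, v₃, v₄`. -/
def Omega0 (v₁ v₂ v₃ v₄ : C4) : ℂ :=
  Matrix.det (Matrix.of fun r c => ![v₁, v₂, v₃, v₄] c r)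

/-- The point `p(θ₁,θ₂,θ₃) = ½(e^{iθ₁}, e^{iθ₂}, e^{iθ₃}, e^{i(π/2−θ₁−θ₂−θ₃)})` of the
torus `A₁`. -/
def pt (θ₁ θ₂ θ₃ : ℝ) : C4 :=
  ![(1 / 2 : ℂ) * Complex.exp (Complex.I * (θ₁ : ℂ)),
    (1 / 2 : ℂ) * Complex.exp (Complex.I * (θ₂ : ℂ)),
    (1 / 2 : ℂ) * Complex.exp (Complex.I * (θ₃ : ℂ)),
    (1 / 2 : ℂ) * Complex.exp (Complex.I * ((Real.pi / 2 - θ₁ - θ₂ - θ₃ : ℝ) : ℂ))]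

/-- `Y₁ = ∂p/∂θ₁`. -/
def Y1 (θ₁ θ₂ θ₃ : ℝ) : C4 :=
  ![(Complex.I / 2) * Complex.exp (Complex.I * (θ₁ : ℂ)), 0, 0,
    -(Complex.I / 2) * Complex.exp (Complex.I * ((Real.pi / 2 - θ₁ - θ₂ - θ₃ : ℝ) : ℂ))]

/-- `Y₂ = ∂p/∂θ₂`. -/
def Y2 (θ₁ θ₂ θ₃ : ℝ) : C4 :=
  ![0, (Complex.I / 2) * Complex.exp (Complex.I * (θ₂ : ℂ)), 0,
    -(Complex.I / 2) * Complex.exp (Complex.I * ((Real.pi / 2 - θ₁ - θ₂ - θ₃ : ℝ) : ℂ))]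

/-- `Y₃ = ∂p/∂θ₃`. -/
def Y3 (θ₁ θ₂ θ₃ : ℝ) : C4 :=
  ![0, 0, (Complex.I / 2) * Complex.exp (Complex.I * (θ₃ : ℂ)),
    -(Complex.I / 2) * Complex.exp (Complex.I * ((Real.pi / 2 - θ₁ - θ₂ - θ₃ : ℝ) : ℂ))]

def torusPhase (θ₁ θ₂ θ₃ : ℝ) : C4 :=
  ![Complex.exp (Complex.I * (θ₁ : ℂ)), Complex.exp (Complex.I * (θ₂ : ℂ)),
    Complex.exp (Complex.I * (θ₃ : ℂ)),
    Complex.exp (Complex.I * ((Real.pi / 2 - θ₁ - θ₂ - θ₃ : ℝ) : ℂ))]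

lemma norm_torusPhase (θ₁ θ₂ θ₃ : ℝ) (j : Fin 4) : ‖torusPhase θ₁ θ₂ θ₃ j‖ = 1 := by
  fin_cases j <;> exact Complex.norm_exp_I_mul_ofReal _

lemma prod_torusPhase (θ₁ θ₂ θ₃ : ℝ) : ∏ j, torusPhase θ₁ θ₂ θ₃ j = Complex.I := by
  have hsum : Complex.I * θ₁ + Complex.I * θ₂ + Complex.I * θ₃ +
      Complex.I * ((Real.pi / 2 - θ₁ - θ₂ - θ₃ : ℝ) : ℂ) = Real.pi / 2 * Complex.I := by
    push_cast; ring
  rw [Fin.prod_univ_four]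
  show Complex.exp _ * Complex.exp _ * Complex.exp _ * Complex.exp _ = _
  rw [← Complex.exp_add, ← Complex.exp_add, ← Complex.exp_add, hsum, Complex.exp_pi_div_two_mul_I]

lemma pt_eq_mul_torusPhase (θ₁ θ₂ θ₃ : ℝ) :
    pt θ₁ θ₂ θ₃ = ![1 / 2, 1 / 2, 1 / 2, 1 / 2] * torusPhase θ₁ θ₂ θ₃ := by
  ext j; fin_cases j <;> rfl

lemma Y1_eq_mul_torusPhase (θ₁ θ₂ θ₃ : ℝ) :
    Y1 θ₁ θ₂ θ₃ = ![Complex.I / 2, 0, 0, -(Complex.I / 2)] * torusPhase θ₁ θ₂ θ₃ := by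
  ext j; fin_cases j <;> simp [Y1, torusPhase]

lemma Y2_eq_mul_torusPhase (θ₁ θ₂ θ₃ : ℝ) :
    Y2 θ₁ θ₂ θ₃ = ![0, Complex.I / 2, 0, -(Complex.I / 2)] * torusPhase θ₁ θ₂ θ₃ := by
  ext j; fin_cases j <;> simp [Y2, torusPhase]

lemma Y3_eq_mul_torusPhase (θ₁ θ₂ θ₃ : ℝ) :
    Y3 θ₁ θ₂ θ₃ = ![0, 0, Complex.I / 2, -(Complex.I / 2)] * torusPhase θ₁ θ₂ θ₃ := by
  ext j; fin_cases j <;> simp [Y3, torusPhase]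

lemma omega0_mul_of_norm_eq_one {e : C4} (he : ∀ j, ‖e j‖ = 1) (u v : C4) :
    omega0 (u * e) (v * e) = omega0 u v := by
  refine Finset.sum_congr rfl fun j _ => congrArg Complex.im ?_
  have hconj : (starRingEnd ℂ) (e j) * e j = 1 := by
    rw [Complex.conj_mul', he j]; norm_num
  simp only [Pi.mul_apply, map_mul]
  linear_combination (starRingEnd ℂ (u j) * v j) * hconj

lemma Omega0_mul (e v₁ v₂ v₃ v₄ : C4) :
    Omega0 (v₁ * e) (v₂ * e) (v₃ * e) (v₄ * e) = (∏ j, e j) * Omega0 v₁ v₂ v₃ v₄ := by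
  have : (Matrix.of fun r c => ![v₁ * e, v₂ * e, v₃ * e, v₄ * e] c r) =
      Matrix.diagonal e * Matrix.of fun r c => ![v₁, v₂, v₃, v₄] c r := by
    ext r c; fin_cases c <;> simp [mul_comm]
  rw [Omega0, Omega0, this, Matrix.det_mul, Matrix.det_diagonal]

def torusCoeffs : Set C4 :=
  {![1 / 2, 1 / 2, 1 / 2, 1 / 2], ![Complex.I / 2, 0, 0, -(Complex.I / 2)],
    ![0, Complex.I / 2, 0, -(Complex.I / 2)], ![0, 0, Complex.I / 2, -(Complex.I / 2)]}

lemma omega0_torusCoeffs : ∀ u ∈ torusCoeffs, ∀ v ∈ torusCoeffs, omega0 u v = 0 := by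
  simp only [torusCoeffs, Set.mem_insert_iff, Set.mem_singleton_iff]
  rintro u (rfl | rfl | rfl | rfl) v (rfl | rfl | rfl | rfl) <;>
    simp [omega0, Fin.sum_univ_four]

lemma Omega0_torusCoeffs :
    Omega0 ![1 / 2, 1 / 2, 1 / 2, 1 / 2] ![Complex.I / 2, 0, 0, -(Complex.I / 2)]
      ![0, Complex.I / 2, 0, -(Complex.I / 2)] ![0, 0, Complex.I / 2, -(Complex.I / 2)] =
      Complex.I / 4 := by
  simp [Omega0, Matrix.det_succ_column_zero, Fin.sum_univ_succ, Fin.succAbove]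
  linear_combination (-Complex.I / 4) * Complex.I_sq

lemma image_torusCoeffs (θ₁ θ₂ θ₃ : ℝ) :
    (· * torusPhase θ₁ θ₂ θ₃) '' torusCoeffs =
      {pt θ₁ θ₂ θ₃, Y1 θ₁ θ₂ θ₃, Y2 θ₁ θ₂ θ₃, Y3 θ₁ θ₂ θ₃} := by
  simp only [torusCoeffs, Set.image_insert_eq, Set.image_singleton, pt_eq_mul_torusPhase,
    Y1_eq_mul_torusPhase, Y2_eq_mul_torusPhase, Y3_eq_mul_torusPhase]

/-- The cone over the torus `A₁` is special Lagrangian in `ℂ⁴`: `ω₀` vanishes on all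
pairs from `{p, Y₁, Y₂, Y₃}` and `Im Ω₀(p, Y₁, Y₂, Y₃) = 0`.  Hence `A₁` is a minimal
Legendrian, hence associative, 3-torus in `S⁷`. -/
theorem torus_A1_cone_is_specialLagrangian (θ₁ θ₂ θ₃ : ℝ) :
    (∀ a ∈ ({pt θ₁ θ₂ θ₃, Y1 θ₁ θ₂ θ₃, Y2 θ₁ θ₂ θ₃, Y3 θ₁ θ₂ θ₃} : Set C4),
     ∀ b ∈ ({pt θ₁ θ₂ θ₃, Y1 θ₁ θ₂ θ₃, Y2 θ₁ θ₂ θ₃, Y3 θ₁ θ₂ θ₃} : Set C4),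
      omega0 a b = 0) ∧
    (Omega0 (pt θ₁ θ₂ θ₃) (Y1 θ₁ θ₂ θ₃) (Y2 θ₁ θ₂ θ₃) (Y3 θ₁ θ₂ θ₃)).im = 0 := by
  refine ⟨?_, ?_⟩
  · rw [← image_torusCoeffs]
    simp only [Set.forall_mem_image, omega0_mul_of_norm_eq_one (norm_torusPhase θ₁ θ₂ θ₃)]
    exact omega0_torusCoeffs
  · rw [pt_eq_mul_torusPhase, Y1_eq_mul_torusPhase, Y2_eq_mul_torusPhase, Y3_eq_mul_torusPhase,
      Omega0_mul, prod_torusPhase, Omega0_torusCoeffs]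
    simp

end
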